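/- arXiv:2404.08128 — 5 statements merged into one kernel-verified Lean document; each statement's English description precedes it below -/
import Mathlib

section
/- If λ ∈ ℝ^L satisfies the dual equation Σ_{i=1}^n exp(⟨λ, x_i⟩)(x_i − g̃) = 0, then for every feasible weight vector q one has Σ_{i=1}^n p_i(λ) log p_i(λ) ≤ Σ_{i=1}^n q_i log q_i; that is, the calibration weights p(λ) minimize the negative entropy over all feasible weight vectors. -/
open Finset

/-- Calibration weights associated with a dual vector `lam`:
`p_i(λ) = exp(⟨λ, x_i⟩) / Σ_j exp(⟨λ, x_j⟩)`. -/
noncomputable def calibWeights {n L : ℕ} (x : Fin n → Fin L → ℝ) (lam : Fin L → ℝ)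
    (i : Fin n) : ℝ :=
  Real.exp (∑ j, lam j * x i j) / ∑ k, Real.exp (∑ j, lam j * x k j)

theorem calibWeights_minimize_negEntropy (n L : ℕ) (hn : 1 ≤ n) (hL : 1 ≤ L)
    (x : Fin n → Fin L → ℝ) (gtilde : Fin L → ℝ) (lam : Fin L → ℝ)
    (hdual : ∑ i, Real.exp (∑ j, lam j * x i j) • (x i - gtilde) = 0)
    (q : Fin n → ℝ)
    (hq_nonneg : ∀ i, 0 ≤ q i)
    (hq_sum : ∑ i, q i = 1)
    (hq_moment : ∑ i, q i • x i = gtilde) :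
    ∑ i, calibWeights x lam i * Real.log (calibWeights x lam i)
      ≤ ∑ i, q i * Real.log (q i) := by
  classical
  have hne : (Finset.univ : Finset (Fin n)).Nonempty := ⟨⟨0, hn⟩, Finset.mem_univ _⟩
  set E : Fin n → ℝ := fun i => Real.exp (∑ j, lam j * x i j) with hE
  set S : ℝ := ∑ k, E k with hS
  have hSpos : 0 < S := Finset.sum_pos (fun i _ => Real.exp_pos _) hne
  have hp : ∀ i, calibWeights x lam i = E i / S := fun i => rfl
  have hppos : ∀ i, 0 < calibWeights x lam i := fun i => div_pos (Real.exp_pos _) hSpos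
  have hpsum : ∑ i, calibWeights x lam i = 1 := by
    simp only [hp]
    rw [← Finset.sum_div, ← hS, div_self (ne_of_gt hSpos)]
  have hlogp : ∀ i, Real.log (calibWeights x lam i)
      = (∑ j, lam j * x i j) - Real.log S := by
    intro i
    rw [hp, Real.log_div (Real.exp_ne_zero _) (ne_of_gt hSpos), Real.log_exp]
  -- coordinate versions of the dual equation and moment condition
  have hdualj : ∀ j, ∑ i, E i * x i j = S * gtilde j := by
    intro j
    have h := congrFun hdual j
    simp only [Finset.sum_apply, Pi.smul_apply, Pi.sub_apply, smul_eq_mul,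
      Pi.zero_apply, mul_sub] at h
    have h2 : ∑ i, E i * x i j - ∑ i, E i * gtilde j = 0 := by
      rw [← Finset.sum_sub_distrib]; exact h
    have h3 : ∑ i, E i * gtilde j = S * gtilde j := by
      rw [← Finset.sum_mul]
    linarith
  have hqj : ∀ j, ∑ i, q i * x i j = gtilde j := by
    intro j
    have h := congrFun hq_moment j
    simpa [Finset.sum_apply, Pi.smul_apply, smul_eq_mul] using h
  -- key: Σ p_i ⟨λ,x_i⟩ = Σ q_i ⟨λ,x_i⟩ = ⟨λ, g̃⟩
  have hkeyp : ∑ i, calibWeights x lam i * (∑ j, lam j * x i j)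
      = ∑ j, lam j * gtilde j := by
    have h1 : ∀ i, calibWeights x lam i * (∑ j, lam j * x i j)
        = ∑ j, lam j * (calibWeights x lam i * x i j) := by
      intro i; rw [Finset.mul_sum]; exact Finset.sum_congr rfl (fun j _ => by ring)
    rw [Finset.sum_congr rfl (fun i _ => h1 i), Finset.sum_comm]
    refine Finset.sum_congr rfl (fun j _ => ?_)
    rw [← Finset.mul_sum]
    congr 1
    calc ∑ i, calibWeights x lam i * x i j = (∑ i, E i * x i j) / S := by
          simp only [hp]
          rw [Finset.sum_div]
          exact Finset.sum_congr rfl (fun i _ => by ring)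
      _ = gtilde j := by rw [hdualj j]; field_simp
  have hkeyq : ∑ i, q i * (∑ j, lam j * x i j) = ∑ j, lam j * gtilde j := by
    have h1 : ∀ i, q i * (∑ j, lam j * x i j)
        = ∑ j, lam j * (q i * x i j) := by
      intro i; rw [Finset.mul_sum]; exact Finset.sum_congr rfl (fun j _ => by ring)
    rw [Finset.sum_congr rfl (fun i _ => h1 i), Finset.sum_comm]
    refine Finset.sum_congr rfl (fun j _ => ?_)
    rw [← Finset.mul_sum, hqj j]
  -- Σ p log p = Σ q log p
  have hplogp : ∑ i, calibWeights x lam i * Real.log (calibWeights x lam i)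
      = ∑ j, lam j * gtilde j - Real.log S := by
    calc ∑ i, calibWeights x lam i * Real.log (calibWeights x lam i)
        = ∑ i, (calibWeights x lam i * (∑ j, lam j * x i j)
            - calibWeights x lam i * Real.log S) := by
          refine Finset.sum_congr rfl (fun i _ => ?_)
          rw [hlogp i]; ring
      _ = ∑ j, lam j * gtilde j - Real.log S := by
          rw [Finset.sum_sub_distrib, hkeyp, ← Finset.sum_mul, hpsum, one_mul]
  have hqlogp : ∑ i, q i * Real.log (calibWeights x lam i)
      = ∑ j, lam j * gtilde j - Real.log S := by
    calc ∑ i, q i * Real.log (calibWeights x lam i)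
        = ∑ i, (q i * (∑ j, lam j * x i j) - q i * Real.log S) := by
          refine Finset.sum_congr rfl (fun i _ => ?_)
          rw [hlogp i]; ring
      _ = ∑ j, lam j * gtilde j - Real.log S := by
          rw [Finset.sum_sub_distrib, hkeyq, ← Finset.sum_mul, hq_sum, one_mul]
  rw [hplogp, ← hqlogp]
  -- Gibbs' inequality: Σ q log p ≤ Σ q log q
  have hterm : ∀ i, q i * Real.log (calibWeights x lam i) - q i * Real.log (q i)
      ≤ calibWeights x lam i - q i := by
    intro i
    rcases eq_or_lt_of_le (hq_nonneg i) with h0 | h0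
    · simp [← h0]; exact le_of_lt (hppos i)
    · have hlog : Real.log (calibWeights x lam i / q i)
          ≤ calibWeights x lam i / q i - 1 :=
        Real.log_le_sub_one_of_pos (div_pos (hppos i) h0)
      rw [Real.log_div (ne_of_gt (hppos i)) (ne_of_gt h0)] at hlog
      have := mul_le_mul_of_nonneg_left hlog (le_of_lt h0)
      calc q i * Real.log (calibWeights x lam i) - q i * Real.log (q i)
          = q i * (Real.log (calibWeights x lam i) - Real.log (q i)) := by ring
        _ ≤ q i * (calibWeights x lam i / q i - 1) := this
        _ = calibWeights x lam i - q i := by field_simp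
  have hsum : ∑ i, (q i * Real.log (calibWeights x lam i) - q i * Real.log (q i))
      ≤ ∑ i, (calibWeights x lam i - q i) :=
    Finset.sum_le_sum (fun i _ => hterm i)
  rw [Finset.sum_sub_distrib, Finset.sum_sub_distrib, hpsum, hq_sum] at hsum
  linarith
end

section
/- If λ ∈ ℝ^L satisfies the dual equation Σ_{i=1}^n exp(⟨λ, x_i⟩)(x_i − g̃) = 0 and q is a feasible weight vector with q ≠ p(λ), then Σ_{i=1}^n p_i(λ) log p_i(λ) < Σ_{i=1}^n q_i log q_i; hence p(λ) is the unique minimizer of the negative entropy over the feasible weight vectors. -/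
open Finset

lemma entropy_aux {p q : ℝ} (hp : 0 < p) (hq : 0 ≤ q) :
    q - p ≤ q * Real.log q - q * Real.log p := by
  rcases eq_or_lt_of_le hq with h | h
  · simp [← h]; linarith
  · have h1 : Real.log (p / q) ≤ p / q - 1 := Real.log_le_sub_one_of_pos (div_pos hp h)
    rw [Real.log_div hp.ne' h.ne'] at h1
    have h2 : q * (p / q) = p := by field_simp
    nlinarith [mul_le_mul_of_nonneg_left h1 h.le]

lemma entropy_aux_strict {p q : ℝ} (hp : 0 < p) (hq : 0 ≤ q) (hne : q ≠ p) :
    q - p < q * Real.log q - q * Real.log p := by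
  rcases eq_or_lt_of_le hq with h | h
  · simp [← h]; linarith
  · have hpq : p / q ≠ 1 := by
      intro e
      exact hne (((div_eq_one_iff_eq h.ne').mp e).symm)
    have h1 : Real.log (p / q) < p / q - 1 := Real.log_lt_sub_one_of_pos (div_pos hp h) hpq
    rw [Real.log_div hp.ne' h.ne'] at h1
    have h2 : q * (p / q) = p := by field_simp
    nlinarith [mul_lt_mul_of_pos_left h1 h]

theorem calibWeights_unique_minimizer (n L : ℕ) (hn : 1 ≤ n) (hL : 1 ≤ L)
    (x : Fin n → Fin L → ℝ) (gtilde : Fin L → ℝ) (lam : Fin L → ℝ)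
    (hdual : ∑ i, Real.exp (∑ j, lam j * x i j) • (x i - gtilde) = 0)
    (q : Fin n → ℝ)
    (hq_nonneg : ∀ i, 0 ≤ q i)
    (hq_sum : ∑ i, q i = 1)
    (hq_moment : ∑ i, q i • x i = gtilde)
    (hq_ne : q ≠ calibWeights x lam) :
    ∑ i, calibWeights x lam i * Real.log (calibWeights x lam i)
      < ∑ i, q i * Real.log (q i) := by
  classical
  set a : Fin n → ℝ := fun i => ∑ j, lam j * x i j with ha
  set s : ℝ := ∑ k, Real.exp (a k) with hs
  have hspos : 0 < s :=
    Finset.sum_pos (fun k _ => Real.exp_pos _) ⟨⟨0, hn⟩, Finset.mem_univ _⟩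
  set p : Fin n → ℝ := calibWeights x lam with hp
  have hpdef : ∀ i, p i = Real.exp (a i) / s := fun i => rfl
  have hppos : ∀ i, 0 < p i := fun i => div_pos (Real.exp_pos _) hspos
  have hpsum : ∑ i, p i = 1 := by
    have h1 : ∑ i, p i = ∑ i, Real.exp (a i) / s :=
      Finset.sum_congr rfl fun i _ => hpdef i
    rw [h1, ← Finset.sum_div, ← hs, div_self hspos.ne']
  have hlogp : ∀ i, Real.log (p i) = a i - Real.log s := by
    intro i
    rw [hpdef, Real.log_div (Real.exp_ne_zero _) hspos.ne', Real.log_exp]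
  -- moment condition for p
  have hpmoment : ∀ j, ∑ i, p i * x i j = gtilde j := by
    intro j
    have h := congrFun hdual j
    simp only [Finset.sum_apply, Pi.smul_apply, Pi.sub_apply, smul_eq_mul,
      Pi.zero_apply, mul_sub] at h
    rw [Finset.sum_sub_distrib, ← Finset.sum_mul, ← hs, sub_eq_zero] at h
    have : ∑ i, p i * x i j = (∑ i, Real.exp (a i) * x i j) / s := by
      rw [Finset.sum_div]
      refine Finset.sum_congr rfl fun i _ => ?_
      rw [hpdef]; ring
    rw [this, h, mul_comm, mul_div_assoc, div_self hspos.ne', mul_one]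
  have hqmoment : ∀ j, ∑ i, q i * x i j = gtilde j := by
    intro j
    have h := congrFun hq_moment j
    simpa only [Finset.sum_apply, Pi.smul_apply, smul_eq_mul] using h
  -- ∑ q log p = ∑ p log p
  have hwa : ∀ w : Fin n → ℝ, ∑ i, w i * a i = ∑ j, lam j * ∑ i, w i * x i j := by
    intro w
    simp only [ha, Finset.mul_sum]
    rw [Finset.sum_comm]
    refine Finset.sum_congr rfl fun j _ => Finset.sum_congr rfl fun i _ => by ring
  have hkey : ∑ i, q i * Real.log (p i) = ∑ i, p i * Real.log (p i) := by
    simp only [hlogp, mul_sub]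
    rw [Finset.sum_sub_distrib, Finset.sum_sub_distrib, ← Finset.sum_mul, ← Finset.sum_mul,
      hq_sum, hpsum, hwa, hwa]
    have h2 : ∑ j, lam j * ∑ i, q i * x i j = ∑ j, lam j * ∑ i, p i * x i j :=
      Finset.sum_congr rfl fun j _ => by rw [hqmoment, hpmoment]
    rw [h2]
  -- KL positivity
  obtain ⟨i0, hi0⟩ := Function.ne_iff.mp hq_ne
  have hlt : ∑ i, (q i - p i) < ∑ i, (q i * Real.log (q i) - q i * Real.log (p i)) := by
    refine Finset.sum_lt_sum (fun i _ => entropy_aux (hppos i) (hq_nonneg i))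
      ⟨i0, Finset.mem_univ _, entropy_aux_strict (hppos i0) (hq_nonneg i0) hi0⟩
  rw [Finset.sum_sub_distrib, Finset.sum_sub_distrib, hq_sum, hpsum, sub_self, hkey] at hlt
  linarith
end

section
/- If λ ∈ ℝ^L satisfies the dual equation Σ_{i=1}^n exp(⟨λ, x_i⟩)(x_i − g̃) = 0, then for every feasible weight vector q the cross-entropy identity Σ_{i=1}^n q_i log p_i(λ) = Σ_{i=1}^n p_i(λ) log p_i(λ) holds. -/
open Finset

/-!
Since `log p_i(λ) = ⟨λ, x_i⟩ - log Σ_k exp ⟨λ, x_k⟩` is affine in `x_i`, the cross entropy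
`Σ_i w_i log p_i(λ)` of any weight vector `w` depends only on `Σ_i w_i` and `Σ_i w_i x_i`.
Both `p(λ)` and `q` have total mass `1`, and the dual equation says that `p(λ)` has moment `g̃` too.
-/

open Real Matrix

section

variable {n L : ℕ} (x : Fin n → Fin L → ℝ) (lam : Fin L → ℝ)

theorem calibWeights_eq (i : Fin n) :
    calibWeights x lam i = exp (lam ⬝ᵥ x i) / ∑ k, exp (lam ⬝ᵥ x k) :=
  rfl

theorem sum_exp_dotProduct_pos (hn : 0 < n) : 0 < ∑ k : Fin n, exp (lam ⬝ᵥ x k) :=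
  sum_pos (fun _ _ ↦ exp_pos _) ⟨⟨0, hn⟩, mem_univ _⟩

theorem sum_calibWeights (hn : 0 < n) : ∑ i, calibWeights x lam i = 1 := by
  simp_rw [calibWeights_eq, ← sum_div]
  exact div_self (sum_exp_dotProduct_pos x lam hn).ne'

theorem sum_calibWeights_smul {g : Fin L → ℝ} (hn : 0 < n)
    (hdual : ∑ i, exp (lam ⬝ᵥ x i) • (x i - g) = 0) :
    ∑ i, calibWeights x lam i • x i = g := by
  have hS := (sum_exp_dotProduct_pos x lam hn).ne'
  have hmoment : ∑ i, exp (lam ⬝ᵥ x i) • x i = (∑ k, exp (lam ⬝ᵥ x k)) • g := by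
    simpa only [smul_sub, sum_sub_distrib, ← sum_smul, sub_eq_zero] using hdual
  simp_rw [calibWeights_eq, div_eq_inv_mul, mul_smul, ← smul_sum, hmoment, smul_smul,
    inv_mul_cancel₀ hS, one_smul]

theorem log_calibWeights (i : Fin n) :
    log (calibWeights x lam i) = lam ⬝ᵥ x i - log (∑ k, exp (lam ⬝ᵥ x k)) := by
  rw [calibWeights_eq, log_div (exp_ne_zero _)
    (sum_exp_dotProduct_pos x lam i.pos).ne', log_exp]

theorem sum_mul_log_calibWeights (w : Fin n → ℝ) :
    ∑ i, w i * log (calibWeights x lam i)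
      = lam ⬝ᵥ (∑ i, w i • x i) - (∑ i, w i) * log (∑ k, exp (lam ⬝ᵥ x k)) := by
  simp_rw [log_calibWeights, mul_sub, sum_sub_distrib, ← sum_mul, dotProduct_sum,
    dotProduct_smul, smul_eq_mul]

end

theorem calibWeights_cross_entropy_general (n L : ℕ) (hn : 1 ≤ n)
    (x : Fin n → Fin L → ℝ) (gtilde : Fin L → ℝ) (lam : Fin L → ℝ)
    (hdual : ∑ i, Real.exp (∑ j, lam j * x i j) • (x i - gtilde) = 0)
    (q : Fin n → ℝ)
    (hq_sum : ∑ i, q i = 1)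
    (hq_moment : ∑ i, q i • x i = gtilde) :
    ∑ i, q i * Real.log (calibWeights x lam i)
      = ∑ i, calibWeights x lam i * Real.log (calibWeights x lam i) := by
  rw [sum_mul_log_calibWeights, sum_mul_log_calibWeights, hq_sum, hq_moment,
    sum_calibWeights x lam hn, sum_calibWeights_smul x lam hn hdual]

theorem calibWeights_cross_entropy (n L : ℕ) (hn : 1 ≤ n) (hL : 1 ≤ L)
    (x : Fin n → Fin L → ℝ) (gtilde : Fin L → ℝ) (lam : Fin L → ℝ)
    (hdual : ∑ i, Real.exp (∑ j, lam j * x i j) • (x i - gtilde) = 0)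
    (q : Fin n → ℝ)
    (hq_nonneg : ∀ i, 0 ≤ q i)
    (hq_sum : ∑ i, q i = 1)
    (hq_moment : ∑ i, q i • x i = gtilde) :
    ∑ i, q i * Real.log (calibWeights x lam i)
      = ∑ i, calibWeights x lam i * Real.log (calibWeights x lam i) :=
  calibWeights_cross_entropy_general n L hn x gtilde lam hdual q hq_sum hq_moment
end

section
/- The inverse-probability-of-censoring weights have unit mean: E[1{C ≥ Y}/G(Y)] = 1. -/
open MeasureTheory ProbabilityTheory Set
open scoped ENNReal

/-! By independence, integrating out `C` at `Y = y` turns the weight `1{y ≤ C} / G(y)` into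
`P(C ≥ y) / G(y)`. Since `C` has no atoms, `P(C ≥ y) = P(C > y) = G(y)`, and `G(Y) ≥ G(t*) > 0`
because `G` is antitone, so this inner integral is `1`. The computation is carried out in `ℝ≥0∞`,
where Fubini on the joint law of `(Y, C)` (the product of the marginals) needs no integrability. -/

theorem ProbabilityTheory.IndepFun.lintegral_comp_eq_lintegral_lintegral
    {Ω α β : Type*} [MeasurableSpace Ω] [MeasurableSpace α] [MeasurableSpace β]
    {μ : Measure Ω} [IsFiniteMeasure μ] {X : Ω → α} {Y : Ω → β}
    (hXY : IndepFun X Y μ) (hX : Measurable X) (hY : Measurable Y)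
    {f : α × β → ℝ≥0∞} (hf : Measurable f) :
    ∫⁻ ω, f (X ω, Y ω) ∂μ = ∫⁻ x, ∫⁻ y, f (x, y) ∂(μ.map Y) ∂(μ.map X) := by
  rw [← lintegral_prod _ hf.aemeasurable,
    ← (indepFun_iff_map_prod_eq_prod_map_map hX.aemeasurable hY.aemeasurable).1 hXY,
    lintegral_map hf (hX.prodMk hY)]

theorem MeasureTheory.measure_le_eq_measure_lt_of_measure_eq_zero
    {Ω : Type*} [MeasurableSpace Ω] {μ : Measure Ω} {C : Ω → ℝ} {y : ℝ}
    (hy : μ {ω | C ω = y} = 0) :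
    μ {ω | y ≤ C ω} = μ {ω | y < C ω} := by
  rw [← measure_sdiff_null hy]
  congr 1
  ext ω
  simp [lt_iff_le_and_ne, eq_comm]

theorem MeasureTheory.antitone_toReal_measure_lt
    {Ω : Type*} [MeasurableSpace Ω] (μ : Measure Ω) [IsFiniteMeasure μ] (C : Ω → ℝ) :
    Antitone fun y => (μ {ω | y < C ω}).toReal :=
  fun _ _ hab => ENNReal.toReal_mono (measure_ne_top _ _)
    (measure_mono fun _ hω => hab.trans_lt hω)

theorem integral_indicator_le_div_survival_eq_one
    {Ω : Type*} [MeasurableSpace Ω] {P : Measure Ω} [IsProbabilityMeasure P]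
    {Y C : Ω → ℝ} (hY : Measurable Y) (hC : Measurable C) (hindep : IndepFun Y C P)
    (hatom : ∀ c, P {ω | C ω = c} = 0)
    {G : ℝ → ℝ} (hG : ∀ y, G y = (P {ω | y < C ω}).toReal)
    (hpos : ∀ᵐ ω ∂P, 0 < G (Y ω)) :
    ∫ ω, (if Y ω ≤ C ω then (1 : ℝ) else 0) / G (Y ω) ∂P = 1 := by
  have hGmeas : Measurable G :=
    (funext hG ▸ antitone_toReal_measure_lt P C : Antitone G).measurable
  set F : ℝ × ℝ → ℝ≥0∞ := {p | p.1 ≤ p.2}.indicator fun p => ENNReal.ofReal (G p.1)⁻¹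
  have hF : Measurable F :=
    (ENNReal.measurable_ofReal.comp (hGmeas.comp measurable_fst).inv).indicator
      (measurableSet_le measurable_fst measurable_snd)
  have hinner (y : ℝ) (hy : 0 < G y) : ∫⁻ c, F (y, c) ∂(P.map C) = 1 := by
    have hsection : (fun c => F (y, c)) = (Ici y).indicator fun _ => ENNReal.ofReal (G y)⁻¹ := by
      ext c; simp [F, indicator]
    rw [hsection, lintegral_indicator_const measurableSet_Ici,
      Measure.map_apply hC measurableSet_Ici]
    change _ * P {ω | y ≤ C ω} = 1
    rw [measure_le_eq_measure_lt_of_measure_eq_zero (hatom y),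
      ← ENNReal.ofReal_toReal (measure_ne_top P _), ← hG,
      ← ENNReal.ofReal_mul (inv_nonneg.2 hy.le), inv_mul_cancel₀ hy.ne', ENNReal.ofReal_one]
  have hpos_map : ∀ᵐ y ∂(P.map Y), 0 < G y :=
    (ae_map_iff hY.aemeasurable (measurableSet_lt measurable_const hGmeas)).2 hpos
  have hlintegral : ∫⁻ ω, ENNReal.ofReal ((if Y ω ≤ C ω then 1 else 0) / G (Y ω)) ∂P = 1 :=
    calc _ = ∫⁻ ω, F (Y ω, C ω) ∂P := by
          congr 1; ext ω; by_cases h : Y ω ≤ C ω <;> simp [F, h]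
      _ = ∫⁻ y, ∫⁻ c, F (y, c) ∂(P.map C) ∂(P.map Y) :=
          hindep.lintegral_comp_eq_lintegral_lintegral hY hC hF
      _ = ∫⁻ _, 1 ∂(P.map Y) := lintegral_congr_ae (hpos_map.mono hinner)
      _ = 1 := by simp [Measure.map_apply hY MeasurableSet.univ]
  have hnonneg : 0 ≤ᵐ[P] fun ω => (if Y ω ≤ C ω then (1 : ℝ) else 0) / G (Y ω) :=
    hpos.mono fun ω hω => div_nonneg (by split_ifs <;> norm_num) hω.le
  rw [integral_eq_lintegral_of_nonneg_ae hnonneg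
    ((Measurable.ite (measurableSet_le hY hC) measurable_const measurable_const).div
      (hGmeas.comp hY)).aestronglyMeasurable, hlintegral, ENNReal.toReal_one]

theorem ipcw_weights_unit_mean_general
    {Ω : Type*} [mΩ : MeasurableSpace Ω] (P : Measure Ω) [IsProbabilityMeasure P]
    (T C : Ω → ℝ) (hT : Measurable T) (hC : Measurable C)
    (tstar : ℝ)
    (hindep : IndepFun T C P)
    (hatom : ∀ c : ℝ, P {ω | C ω = c} = 0)
    (G : ℝ → ℝ) (hG : ∀ y, G y = (P {ω | y < C ω}).toReal)
    (hGt : 0 < G tstar) :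
    ∫ ω, (if min (T ω) tstar ≤ C ω then (1 : ℝ) else 0) / G (min (T ω) tstar) ∂P = 1 := by
  have hGanti : Antitone G := funext hG ▸ antitone_toReal_measure_lt P C
  have hG_pos (ω : Ω) : 0 < G (min (T ω) tstar) := hGt.trans_le (hGanti (min_le_right _ _))
  exact integral_indicator_le_div_survival_eq_one (hT.min measurable_const) hC
    (hindep.comp (measurable_id.min measurable_const) measurable_id) hatom hG
    (ae_of_all P hG_pos)

theorem ipcw_weights_unit_mean
    {Ω : Type*} [mΩ : MeasurableSpace Ω] (P : Measure Ω) [IsProbabilityMeasure P]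
    (T C : Ω → ℝ) (hT : Measurable T) (hC : Measurable C)
    (hTnonneg : ∀ ω, 0 ≤ T ω)
    (tstar : ℝ) (htstar : 0 < tstar)
    (hindep : IndepFun T C P)
    (hatom : ∀ c : ℝ, P {ω | C ω = c} = 0)
    (G : ℝ → ℝ) (hG : ∀ y, G y = (P {ω | y < C ω}).toReal)
    (hGt : 0 < G tstar) :
    ∫ ω, (if min (T ω) tstar ≤ C ω then (1 : ℝ) else 0) / G (min (T ω) tstar) ∂P = 1 :=
  ipcw_weights_unit_mean_general (mΩ := mΩ) P T C hT hC tstar hindep hatom G hG hGt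
end

section
/- The population Hajek contrast recovers the average RMST difference: E[1{Z=1} δ* Y / G(Y)] / E[1{Z=1} δ* / G(Y)] − E[1{Z=0} δ* Y / G(Y)] / E[1{Z=0} δ* / G(Y)] = Δ(t*); moreover the denominators satisfy E[1{Z=1} δ*/G(Y)] = π and E[1{Z=0} δ*/G(Y)] = 1 − π. -/
/-!
Since `C` is independent of `(Z, Y)` and has no atoms, conditionally on `(Z, Y)` the event
`{Y ≤ C}` has probability `P(C ≥ Y) = P(C > Y) = G(Y)`. Weighting by `δ*/G(Y)` therefore undoes
the censoring: `E[X δ*/G(Y)] = E[X]` for every bounded `X` that is a function of `(Z, Y)`, and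
`G(Y) ≥ G(t*) > 0` keeps the weights bounded. With `X = 1{Z = z}` this gives the denominators
`P(Z = z)`; with `X = 1{Z = z} Y` it gives `E[1{Z = z} min(T(z), t*)]`, which randomization
factors as `P(Z = z) E[min(T(z), t*)]`, so each ratio is the restricted mean of its arm.
-/

open MeasureTheory ProbabilityTheory

section

variable {Ω : Type*} [MeasurableSpace Ω] {P : Measure Ω} {C : Ω → ℝ}

lemma measureReal_le_eq_measureReal_lt {c : ℝ} (hatom : P {ω | C ω = c} = 0) :
    P.real {ω | c ≤ C ω} = P.real {ω | c < C ω} := by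
  have hdiff : {ω | c ≤ C ω} \ {ω | C ω = c} = {ω | c < C ω} := by
    ext ω
    simp [lt_iff_le_and_ne, eq_comm]
  rw [← hdiff, measureReal_def, measureReal_def, measure_sdiff_null hatom]

lemma integral_mul_ite_le_eq_of_indepFun [IsFiniteMeasure P] {α : Type*} [MeasurableSpace α]
    {W : Ω → α} (hW : Measurable W) (hC : Measurable C) (hind : IndepFun W C P) {y h : α → ℝ}
    (hy : Measurable y) (hh : Measurable h) (hint : Integrable (fun ω => h (W ω)) P) :
    ∫ ω, h (W ω) * (if y (W ω) ≤ C ω then 1 else 0) ∂P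
      = ∫ ω, h (W ω) * P.real {ω' | y (W ω) ≤ C ω'} ∂P := by
  set g : α × ℝ → ℝ := fun p => h p.1 * (if y p.1 ≤ p.2 then 1 else 0)
  have hg : Measurable g := (hh.comp measurable_fst).mul <| Measurable.ite
    (measurableSet_le (hy.comp measurable_fst) measurable_snd) measurable_const measurable_const
  have hgint : Integrable g ((P.map W).prod (P.map C)) := by
    refine (((integrable_map_measure hh.aestronglyMeasurable hW.aemeasurable).mpr hint).comp_fst
      _).norm.mono' hg.aestronglyMeasurable (ae_of_all _ fun p => ?_)
    simp only [g, norm_mul]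
    split_ifs <;> simp
  have hsurv : Antitone fun t => P.real {ω | t ≤ C ω} :=
    fun _ _ hst => measureReal_mono fun _ hω => hst.trans hω
  calc ∫ ω, g (W ω, C ω) ∂P = ∫ p, g p ∂(P.map fun ω => (W ω, C ω)) :=
        (integral_map (hW.prodMk hC).aemeasurable hg.aestronglyMeasurable).symm
    _ = ∫ w, ∫ c, g (w, c) ∂(P.map C) ∂(P.map W) := by
        rw [hind.map_prod_eq_prod_map_map hW.aemeasurable hC.aemeasurable, integral_prod _ hgint]
    _ = ∫ w, h w * P.real {ω' | y w ≤ C ω'} ∂(P.map W) := by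
        refine integral_congr_ae (ae_of_all _ fun w => ?_)
        have hIci : (fun c => if y w ≤ c then (1 : ℝ) else 0) = (Set.Ici (y w)).indicator 1 := by
          ext c
          simp [Set.indicator_apply]
        simp only [g]
        rw [integral_const_mul, hIci, integral_indicator_one measurableSet_Ici,
          map_measureReal_apply hC measurableSet_Ici]
        rfl
    _ = ∫ ω, h (W ω) * P.real {ω' | y (W ω) ≤ C ω'} ∂P :=
        integral_map hW.aemeasurable (hh.mul (hsurv.measurable.comp hy)).aestronglyMeasurable

lemma integral_mul_ite_le_div_survival [IsFiniteMeasure P] {X Y : Ω → ℝ} (hX : Measurable X)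
    (hY : Measurable Y) (hC : Measurable C) (hind : IndepFun (fun ω => (X ω, Y ω)) C P)
    (hatom : ∀ c, P {ω | C ω = c} = 0) {G : ℝ → ℝ} (hG : ∀ t, G t = P.real {ω | t < C ω})
    {M b : ℝ} (hXM : ∀ ω, |X ω| ≤ M) (hYb : ∀ ω, Y ω ≤ b) (hb : 0 < G b) :
    ∫ ω, X ω * (if Y ω ≤ C ω then 1 else 0) / G (Y ω) ∂P = ∫ ω, X ω ∂P := by
  have hG_anti : Antitone G := fun s t hst => by
    rw [hG, hG]
    exact measureReal_mono fun _ hω => hst.trans_lt hω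
  have hGY : ∀ ω, G b ≤ G (Y ω) := fun ω => hG_anti (hYb ω)
  have hh : Measurable fun p : ℝ × ℝ => p.1 / G p.2 :=
    measurable_fst.div (hG_anti.measurable.comp measurable_snd)
  have hint : Integrable (fun ω => X ω / G (Y ω)) P := by
    refine Integrable.of_bound (hh.comp (hX.prodMk hY)).aestronglyMeasurable (M / G b)
      (ae_of_all _ fun ω => ?_)
    rw [Real.norm_eq_abs, abs_div, abs_of_pos (hb.trans_le (hGY ω))]
    exact div_le_div₀ ((abs_nonneg _).trans (hXM ω)) (hXM ω) hb (hGY ω)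
  calc ∫ ω, X ω * (if Y ω ≤ C ω then 1 else 0) / G (Y ω) ∂P
      = ∫ ω, X ω / G (Y ω) * (if Y ω ≤ C ω then 1 else 0) ∂P := by
        simp only [mul_div_right_comm]
    _ = ∫ ω, X ω / G (Y ω) * P.real {ω' | Y ω ≤ C ω'} ∂P :=
        integral_mul_ite_le_eq_of_indepFun (hX.prodMk hY) hC hind measurable_snd hh hint
    _ = ∫ ω, X ω ∂P := by
        refine integral_congr_ae (ae_of_all _ fun ω => ?_)
        dsimp only
        rw [measureReal_le_eq_measureReal_lt (hatom _), ← hG,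
          div_mul_cancel₀ _ (hb.trans_le (hGY ω)).ne']

variable {β : Type*} [MeasurableSpace β] [MeasurableSingletonClass β] [DecidableEq β]
  {Z : Ω → β}

lemma measurable_ite_eq_one_zero (z : β) :
    Measurable fun x : β => if x = z then (1 : ℝ) else 0 :=
  Measurable.ite (measurableSet_singleton z) measurable_const measurable_const

lemma integral_ite_eq_one_zero (hZ : Measurable Z) (z : β) :
    ∫ ω, (if Z ω = z then (1 : ℝ) else 0) ∂P = P.real {ω | Z ω = z} := by
  rw [← integral_indicator_one (s := {ω | Z ω = z}) (hZ (measurableSet_singleton z))]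
  congr with ω
  simp [Set.indicator_apply]

lemma ProbabilityTheory.IndepFun.integral_ite_mul_eq [IsFiniteMeasure P] {V : Ω → ℝ}
    (hind : IndepFun Z V P) (hZ : Measurable Z) (hV : AEStronglyMeasurable V P) (z : β) :
    ∫ ω, (if Z ω = z then 1 else 0) * V ω ∂P = P.real {ω | Z ω = z} * ∫ ω, V ω ∂P := by
  have hI := measurable_ite_eq_one_zero (β := β) z
  rw [← integral_ite_eq_one_zero hZ z]
  exact (hind.comp hI measurable_id).integral_mul_eq_mul_integral
    (hI.comp hZ).aestronglyMeasurable hV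

lemma probReal_eq_zero_eq_one_sub [IsProbabilityMeasure P] {Z : Ω → ℝ} (hZ : Measurable Z)
    (hZ01 : ∀ ω, Z ω = 0 ∨ Z ω = 1) : P.real {ω | Z ω = 0} = 1 - P.real {ω | Z ω = 1} := by
  have hcompl : {ω | Z ω = 0} = {ω | Z ω = 1}ᶜ := by
    ext ω
    rcases hZ01 ω with h | h <;> simp [h]
  rw [hcompl, measureReal_compl (s := {ω | Z ω = 1}) (hZ (measurableSet_singleton 1)),
    probReal_univ]

variable {Y : Ω → ℝ} {G : ℝ → ℝ}

lemma integral_ite_mul_ite_le_div_survival [IsFiniteMeasure P] (hZ : Measurable Z)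
    (hY : Measurable Y) (hC : Measurable C) (hind : IndepFun (fun ω => (Z ω, Y ω)) C P)
    (hatom : ∀ c, P {ω | C ω = c} = 0) (hG : ∀ t, G t = P.real {ω | t < C ω}) {b : ℝ}
    (hYb : ∀ ω, Y ω ≤ b) (hb : 0 < G b) (z : β) :
    ∫ ω, (if Z ω = z then 1 else 0) * (if Y ω ≤ C ω then 1 else 0) / G (Y ω) ∂P
      = P.real {ω | Z ω = z} := by
  have hI := measurable_ite_eq_one_zero (β := β) z
  rw [integral_mul_ite_le_div_survival (X := fun ω => if Z ω = z then 1 else 0) (hI.comp hZ) hY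
    hC (hind.comp (hI.prodMap measurable_id) measurable_id) hatom hG (M := 1)
    (fun ω => by split_ifs <;> simp) hYb hb, integral_ite_eq_one_zero hZ z]

lemma integral_ite_mul_ite_le_mul_div_survival [IsFiniteMeasure P] (hZ : Measurable Z)
    (hY : Measurable Y) (hC : Measurable C) (hind : IndepFun (fun ω => (Z ω, Y ω)) C P)
    (hatom : ∀ c, P {ω | C ω = c} = 0) (hG : ∀ t, G t = P.real {ω | t < C ω}) {a b : ℝ}
    (hYab : ∀ ω, Y ω ∈ Set.Icc a b) (hb : 0 < G b) (z : β) :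
    ∫ ω, (if Z ω = z then 1 else 0) * (if Y ω ≤ C ω then 1 else 0) * Y ω / G (Y ω) ∂P
      = ∫ ω, (if Z ω = z then 1 else 0) * Y ω ∂P := by
  have hI : Measurable fun p : β × ℝ => (if p.1 = z then (1 : ℝ) else 0) * p.2 :=
    ((measurable_ite_eq_one_zero z).comp measurable_fst).mul measurable_snd
  have hbound : ∀ ω, |(if Z ω = z then (1 : ℝ) else 0) * Y ω| ≤ max |a| |b| := fun ω => by
    rw [abs_mul]
    refine (mul_le_of_le_one_left (abs_nonneg _) (by split_ifs <;> simp)).trans ?_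
    exact abs_le_max_abs_abs (hYab ω).1 (hYab ω).2
  simp only [mul_right_comm _ (ite (Y _ ≤ C _) _ _)]
  exact integral_mul_ite_le_div_survival (hI.comp (hZ.prodMk hY)) hY hC
    (hind.comp (hI.prodMk measurable_snd) measurable_id) hatom hG hbound (fun ω => (hYab ω).2) hb

end

theorem hajek_contrast_recovers_rmst_difference_general
    {Ω : Type*} [mΩ : MeasurableSpace Ω] (P : Measure Ω) [IsProbabilityMeasure P]
    (T1 T0 C Z : Ω → ℝ)
    (hT1 : Measurable T1) (hT0 : Measurable T0) (hC : Measurable C) (hZ : Measurable Z)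
    (hT1nonneg : ∀ ω, 0 ≤ T1 ω) (hT0nonneg : ∀ ω, 0 ≤ T0 ω)
    (hZ01 : ∀ ω, Z ω = 0 ∨ Z ω = 1)
    (π : ℝ) (hπ : (P {ω | Z ω = 1}).toReal = π) (hπ0 : 0 < π) (hπ1 : π < 1)
    (tstar : ℝ)
    (hZind : IndepFun Z (fun ω => (T1 ω, T0 ω)) P)
    (hCind : IndepFun C (fun ω => (Z ω, T1 ω, T0 ω)) P)
    (hatom : ∀ c : ℝ, P {ω | C ω = c} = 0)
    (G : ℝ → ℝ) (hG : ∀ y, G y = (P {ω | y < C ω}).toReal) (hGt : 0 < G tstar)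
    (T Y δs : Ω → ℝ)
    (hT : ∀ ω, T ω = Z ω * T1 ω + (1 - Z ω) * T0 ω)
    (hY : ∀ ω, Y ω = min (T ω) tstar)
    (hδs : ∀ ω, δs ω = if Y ω ≤ C ω then 1 else 0) :
    ((∫ ω, (if Z ω = 1 then (1 : ℝ) else 0) * δs ω * Y ω / G (Y ω) ∂P)
        / (∫ ω, (if Z ω = 1 then (1 : ℝ) else 0) * δs ω / G (Y ω) ∂P)
      - (∫ ω, (if Z ω = 0 then (1 : ℝ) else 0) * δs ω * Y ω / G (Y ω) ∂P)
        / (∫ ω, (if Z ω = 0 then (1 : ℝ) else 0) * δs ω / G (Y ω) ∂P)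
      = (∫ ω, min (T1 ω) tstar ∂P) - ∫ ω, min (T0 ω) tstar ∂P) ∧
    (∫ ω, (if Z ω = 1 then (1 : ℝ) else 0) * δs ω / G (Y ω) ∂P = π) ∧
    (∫ ω, (if Z ω = 0 then (1 : ℝ) else 0) * δs ω / G (Y ω) ∂P = 1 - π) := by
  obtain rfl : δs = fun ω => if Y ω ≤ C ω then 1 else 0 := funext hδs
  have hYeq : Y = fun ω => min (Z ω * T1 ω + (1 - Z ω) * T0 ω) tstar :=
    funext fun ω => by rw [hY, hT]
  have hYm : Measurable Y := hYeq ▸ by fun_prop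
  have hZY : IndepFun (fun ω => (Z ω, Y ω)) C P := by
    subst hYeq
    exact (hCind.comp (measurable_id (α := ℝ)) (by fun_prop :
      Measurable fun w : ℝ × ℝ × ℝ => (w.1, min (w.1 * w.2.1 + (1 - w.1) * w.2.2) tstar))).symm
  have hYab : ∀ ω, Y ω ∈ Set.Icc (min 0 tstar) tstar := fun ω => by
    have hTnn : 0 ≤ T ω := by rcases hZ01 ω with h | h <;> simp [hT, h, hT0nonneg, hT1nonneg]
    rw [hY]
    exact ⟨min_le_min_right _ hTnn, min_le_right _ _⟩
  have den (z : ℝ) := integral_ite_mul_ite_le_div_survival hZ hYm hC hZY hatom hG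
    (fun ω => (hYab ω).2) hGt z
  have num (z : ℝ) (Tz : Ω → ℝ) (hTz : Measurable Tz) (hZT : IndepFun Z Tz P)
      (hT_eq : ∀ ω, Z ω = z → T ω = Tz ω) :
      ∫ ω, (if Z ω = z then 1 else 0) * (if Y ω ≤ C ω then 1 else 0) * Y ω / G (Y ω) ∂P
        = P.real {ω | Z ω = z} * ∫ ω, min (Tz ω) tstar ∂P := by
    have hZV : IndepFun Z (fun ω => min (Tz ω) tstar) P :=
      hZT.comp measurable_id (measurable_id.min measurable_const)
    rw [integral_ite_mul_ite_le_mul_div_survival hZ hYm hC hZY hatom hG hYab hGt z,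
      ← hZV.integral_ite_mul_eq hZ (hTz.min measurable_const).aestronglyMeasurable z]
    refine integral_congr_ae (ae_of_all _ fun ω => ?_)
    by_cases h : Z ω = z <;> simp [h, hY, hT_eq]
  rw [num 1 T1 hT1 (hZind.comp measurable_id measurable_fst) (fun ω h => by simp [hT, h]),
    num 0 T0 hT0 (hZind.comp measurable_id measurable_snd) (fun ω h => by simp [hT, h]),
    den 1, den 0, probReal_eq_zero_eq_one_sub hZ hZ01, measureReal_def, hπ]
  refine ⟨?_, rfl, rfl⟩
  rw [mul_div_cancel_left₀ _ hπ0.ne', mul_div_cancel_left₀ _ (sub_ne_zero.mpr hπ1.ne')]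

theorem hajek_contrast_recovers_rmst_difference
    {Ω : Type*} [mΩ : MeasurableSpace Ω] (P : Measure Ω) [IsProbabilityMeasure P]
    (T1 T0 C Z : Ω → ℝ)
    (hT1 : Measurable T1) (hT0 : Measurable T0) (hC : Measurable C) (hZ : Measurable Z)
    (hT1nonneg : ∀ ω, 0 ≤ T1 ω) (hT0nonneg : ∀ ω, 0 ≤ T0 ω)
    (hZ01 : ∀ ω, Z ω = 0 ∨ Z ω = 1)
    (π : ℝ) (hπ : (P {ω | Z ω = 1}).toReal = π) (hπ0 : 0 < π) (hπ1 : π < 1)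
    (tstar : ℝ) (htstar : 0 < tstar)
    (hZind : IndepFun Z (fun ω => (T1 ω, T0 ω)) P)
    (hCind : IndepFun C (fun ω => (Z ω, T1 ω, T0 ω)) P)
    (hatom : ∀ c : ℝ, P {ω | C ω = c} = 0)
    (G : ℝ → ℝ) (hG : ∀ y, G y = (P {ω | y < C ω}).toReal) (hGt : 0 < G tstar)
    (T Y δs : Ω → ℝ)
    (hT : ∀ ω, T ω = Z ω * T1 ω + (1 - Z ω) * T0 ω)
    (hY : ∀ ω, Y ω = min (T ω) tstar)
    (hδs : ∀ ω, δs ω = if Y ω ≤ C ω then 1 else 0) :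
    ((∫ ω, (if Z ω = 1 then (1 : ℝ) else 0) * δs ω * Y ω / G (Y ω) ∂P)
        / (∫ ω, (if Z ω = 1 then (1 : ℝ) else 0) * δs ω / G (Y ω) ∂P)
      - (∫ ω, (if Z ω = 0 then (1 : ℝ) else 0) * δs ω * Y ω / G (Y ω) ∂P)
        / (∫ ω, (if Z ω = 0 then (1 : ℝ) else 0) * δs ω / G (Y ω) ∂P)
      = (∫ ω, min (T1 ω) tstar ∂P) - ∫ ω, min (T0 ω) tstar ∂P) ∧
    (∫ ω, (if Z ω = 1 then (1 : ℝ) else 0) * δs ω / G (Y ω) ∂P = π) ∧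
    (∫ ω, (if Z ω = 0 then (1 : ℝ) else 0) * δs ω / G (Y ω) ∂P = 1 - π) :=
  hajek_contrast_recovers_rmst_difference_general (mΩ := mΩ) P T1 T0 C Z hT1 hT0 hC hZ hT1nonneg
    hT0nonneg hZ01 π hπ hπ0 hπ1 tstar hZind hCind hatom G hG hGt T Y δs hT hY hδs
end
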